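/- arXiv:1510.06718 — 5 statements merged into one kernel-verified Lean document; each statement's English description precedes it below -/
import Mathlib

section
/- Let B be a generalized Boolean algebra and I an ideal of B. Then the map ι(ξ) := {A ∈ B : C ⊆ A for some C ∈ ξ} sends ultrafilters of I (I being a generalized Boolean algebra in its own right) to ultrafilters of B, is injective, and its image is exactly the set of ultrafilters of B that contain some element of I. Moreover, for every A ∈ B, ι restricts to a homeomorphism from the Stone spectrum of the principal ideal I_A onto the cylinder set Z(A) ⊆ B̂. -/
variable {B : Type*}

/-- A filter of a generalized Boolean algebra: a nonempty subset not containing `⊥`,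
upward closed, and closed under `⊓`. -/
def IsBFilter [GeneralizedBooleanAlgebra B] (ξ : Set B) : Prop :=
  ξ.Nonempty ∧ ⊥ ∉ ξ ∧ (∀ A ∈ ξ, ∀ C : B, A ≤ C → C ∈ ξ) ∧ ∀ A ∈ ξ, ∀ C ∈ ξ, A ⊓ C ∈ ξ

/-- An ultrafilter of a generalized Boolean algebra: a filter satisfying (F3). -/
def IsBUltra [GeneralizedBooleanAlgebra B] (ξ : Set B) : Prop :=
  IsBFilter ξ ∧ ∀ A ∈ ξ, ∀ C C' : B, A = C ⊔ C' → C ∈ ξ ∨ C' ∈ ξ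

/-- The Stone spectrum of a generalized Boolean algebra: its set of ultrafilters. -/
structure BSpec (B : Type*) [GeneralizedBooleanAlgebra B] where
  carrier : Set B
  ultra : IsBUltra carrier

/-- The topology on the Stone spectrum generated by the cylinder sets. -/
instance (B : Type*) [GeneralizedBooleanAlgebra B] : TopologicalSpace (BSpec B) :=
  TopologicalSpace.generateFrom
    {S : Set (BSpec B) | ∃ A : B, S = {ξ : BSpec B | A ∈ ξ.carrier}}

/-- The cylinder set `Z(A)` of `A`. -/
def cylZ [GeneralizedBooleanAlgebra B] (A : B) : Set (BSpec B) :=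
  {ξ : BSpec B | A ∈ ξ.carrier}

/-- A filter of a subset `I` of a generalized Boolean algebra (e.g. an ideal),
`I` being regarded as a generalized Boolean algebra in its own right. -/
def IsBFilterIn [GeneralizedBooleanAlgebra B] (I ξ : Set B) : Prop :=
  ξ.Nonempty ∧ ξ ⊆ I ∧ ⊥ ∉ ξ ∧ (∀ A ∈ ξ, ∀ C ∈ I, A ≤ C → C ∈ ξ) ∧
    ∀ A ∈ ξ, ∀ C ∈ ξ, A ⊓ C ∈ ξ

/-- An ultrafilter of a subset `I` of a generalized Boolean algebra. -/
def IsBUltraIn [GeneralizedBooleanAlgebra B] (I ξ : Set B) : Prop :=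
  IsBFilterIn I ξ ∧ ∀ A ∈ ξ, ∀ C C' : B, A = C ⊔ C' → C ∈ ξ ∨ C' ∈ ξ

/-- The Stone spectrum of a subset `I` of a generalized Boolean algebra. -/
structure BSpecIn [GeneralizedBooleanAlgebra B] (I : Set B) where
  carrier : Set B
  ultra : IsBUltraIn I carrier

/-- The topology on the Stone spectrum of `I` generated by the cylinder sets of elements
of `I`. -/
instance [GeneralizedBooleanAlgebra B] (I : Set B) : TopologicalSpace (BSpecIn I) :=
  TopologicalSpace.generateFrom
    {S : Set (BSpecIn I) | ∃ A ∈ I, S = {ξ : BSpecIn I | A ∈ ξ.carrier}}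

/-- The map `ι` sending an ultrafilter of an ideal to the ultrafilter of `B` it generates. -/
def iotaSet [GeneralizedBooleanAlgebra B] (ξ : Set B) : Set B :=
  {A : B | ∃ C ∈ ξ, C ≤ A}

/-- An ideal of a generalized Boolean algebra. -/
def IsBIdeal [GeneralizedBooleanAlgebra B] (I : Set B) : Prop :=
  I.Nonempty ∧ (∀ A ∈ I, ∀ C ∈ I, A ⊔ C ∈ I) ∧ ∀ A ∈ I, ∀ C : B, A ⊓ C ∈ I

/-! An ultrafilter `ξ` of an ideal `I` is recovered from its upward closure as `ι(ξ) ∩ I`, and an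
ultrafilter `η` of `B` containing some `A ∈ I` is the upward closure of `η ∩ I`, since every
`D ∈ η` lies above `D ⊓ A ∈ η ∩ I`. For the principal ideal `I_A` one has `D ∈ ι(ξ)` iff
`A ⊓ D ∈ ξ`, so `ι` pulls cylinders back to cylinders, and its inverse `η ↦ η ∩ I_A` pulls
`Z(E)` back to the trace of `Z(E)` on `Z(A)`. -/

section GeneralizedBooleanAlgebra

variable [GeneralizedBooleanAlgebra B]

theorem IsBIdeal.mem_of_le {I : Set B} (hI : IsBIdeal I) {A C : B} (hA : A ∈ I) (hCA : C ≤ A) :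
    C ∈ I := by
  simpa only [inf_eq_right.mpr hCA] using hI.2.2 A hA C

theorem isBIdeal_Iic (A : B) : IsBIdeal (Set.Iic A) :=
  ⟨⟨⊥, bot_le⟩, fun _ hC _ hC' => sup_le hC hC', fun _ hC _ => inf_le_left.trans hC⟩

theorem subset_iotaSet (ξ : Set B) : ξ ⊆ iotaSet ξ :=
  fun C hC => ⟨C, hC, le_rfl⟩

theorem IsBUltraIn.isBUltra_iotaSet {I ξ : Set B} (hξ : IsBUltraIn I ξ) :
    IsBUltra (iotaSet ξ) := by
  obtain ⟨⟨hne, -, hbot, -, hinf⟩, hsplit⟩ := hξ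
  refine ⟨⟨hne.mono (subset_iotaSet ξ), ?_, ?_, ?_⟩, ?_⟩
  · rintro ⟨C, hC, hCbot⟩
    exact hbot (le_bot_iff.mp hCbot ▸ hC)
  · rintro A ⟨C, hC, hCA⟩ D hAD
    exact ⟨C, hC, hCA.trans hAD⟩
  · rintro A ⟨C, hC, hCA⟩ A' ⟨C', hC', hCA'⟩
    exact ⟨C ⊓ C', hinf C hC C' hC', inf_le_inf hCA hCA'⟩
  · rintro A ⟨D, hD, hDA⟩ C C' rfl
    have hD_split : D = D ⊓ C ⊔ D ⊓ C' := by rw [← inf_sup_left, inf_eq_left.mpr hDA]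
    exact (hsplit D hD _ _ hD_split).imp (⟨_, ·, inf_le_right⟩) (⟨_, ·, inf_le_right⟩)

theorem IsBFilterIn.iotaSet_inter {I ξ : Set B} (hξ : IsBFilterIn I ξ) : iotaSet ξ ∩ I = ξ := by
  refine Set.Subset.antisymm ?_ fun C hC => ⟨subset_iotaSet ξ hC, hξ.2.1 hC⟩
  rintro A ⟨⟨C, hC, hCA⟩, hA⟩
  exact hξ.2.2.2.1 C hC A hA hCA

theorem iotaSet_injOn {I : Set B} : Set.InjOn iotaSet {ξ : Set B | IsBUltraIn I ξ} :=
  fun ξ hξ ζ hζ h => by rw [← hξ.1.iotaSet_inter, ← hζ.1.iotaSet_inter, h]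

theorem IsBUltra.isBUltraIn_inter {I η : Set B} (hη : IsBUltra η) (hI : IsBIdeal I) {A : B}
    (hAI : A ∈ I) (hAη : A ∈ η) : IsBUltraIn I (η ∩ I) := by
  obtain ⟨⟨-, hbot, hup, hinf⟩, hsplit⟩ := hη
  refine ⟨⟨⟨A, hAη, hAI⟩, Set.inter_subset_right, fun h => hbot h.1,
    fun C hC D hDI hCD => ⟨hup C hC.1 D hCD, hDI⟩,
    fun C hC D hD => ⟨hinf C hC.1 D hD.1, hI.2.2 C hC.2 D⟩⟩, ?_⟩
  rintro _ ⟨hCη, hCI⟩ C C' rfl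
  exact (hsplit _ hCη C C' rfl).imp (⟨·, hI.mem_of_le hCI le_sup_left⟩)
    (⟨·, hI.mem_of_le hCI le_sup_right⟩)

theorem IsBUltra.iotaSet_inter {I η : Set B} (hη : IsBUltra η) (hI : IsBIdeal I) {A : B}
    (hAI : A ∈ I) (hAη : A ∈ η) : iotaSet (η ∩ I) = η := by
  refine Set.Subset.antisymm (fun D ⟨C, hC, hCD⟩ => hη.1.2.2.1 C hC.1 D hCD) fun D hD => ?_
  have hDA : D ⊓ A ∈ I := by simpa only [inf_comm] using hI.2.2 A hAI D
  exact ⟨D ⊓ A, ⟨hη.1.2.2.2 D hD A hAη, hDA⟩, inf_le_left⟩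

theorem exists_iotaSet_eq_iff {I η : Set B} (hI : IsBIdeal I) (hη : IsBUltra η) :
    (∃ ξ : Set B, IsBUltraIn I ξ ∧ iotaSet ξ = η) ↔ ∃ A ∈ I, A ∈ η := by
  constructor
  · rintro ⟨ξ, hξ, rfl⟩
    obtain ⟨C, hC⟩ := hξ.1.1
    exact ⟨C, hξ.1.2.1 hC, subset_iotaSet ξ hC⟩
  · rintro ⟨A, hAI, hAη⟩
    exact ⟨η ∩ I, hη.isBUltraIn_inter hI hAI hAη, hη.iotaSet_inter hI hAI hAη⟩

theorem BSpec.ext {ξ ζ : BSpec B} (h : ξ.carrier = ζ.carrier) : ξ = ζ := by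
  cases ξ; cases ζ; cases h; rfl

theorem BSpecIn.ext {I : Set B} {ξ ζ : BSpecIn I} (h : ξ.carrier = ζ.carrier) : ξ = ζ := by
  cases ξ; cases ζ; cases h; rfl

theorem isOpen_cylZ (A : B) : IsOpen (cylZ A) :=
  TopologicalSpace.isOpen_generateFrom_of_mem ⟨A, rfl⟩

theorem BSpecIn.isOpen_setOf_mem {I : Set B} {A : B} (hA : A ∈ I) :
    IsOpen {ξ : BSpecIn I | A ∈ ξ.carrier} :=
  TopologicalSpace.isOpen_generateFrom_of_mem ⟨A, hA, rfl⟩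

theorem mem_iotaSet_iff_inf_mem {A D : B} (ξ : BSpecIn (Set.Iic A)) :
    D ∈ iotaSet ξ.carrier ↔ A ⊓ D ∈ ξ.carrier := by
  refine ⟨fun ⟨C, hC, hCD⟩ => ?_, fun h => ⟨A ⊓ D, h, inf_le_right⟩⟩
  exact ξ.ultra.1.2.2.2.1 C hC (A ⊓ D) inf_le_left (le_inf (ξ.ultra.1.2.1 hC) hCD)

def iotaCylZ (A : B) (ξ : BSpecIn (Set.Iic A)) : cylZ A :=
  ⟨⟨iotaSet ξ.carrier, ξ.ultra.isBUltra_iotaSet⟩, by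
    obtain ⟨C, hC⟩ := ξ.ultra.1.1
    exact ⟨C, hC, ξ.ultra.1.2.1 hC⟩⟩

def restrictIic (A : B) (η : cylZ A) : BSpecIn (Set.Iic A) :=
  ⟨η.1.carrier ∩ Set.Iic A, η.1.ultra.isBUltraIn_inter (isBIdeal_Iic A) le_rfl η.2⟩

theorem continuous_iotaCylZ (A : B) : Continuous (iotaCylZ A) := by
  refine continuous_induced_rng.2 (continuous_generateFrom_iff.mpr ?_)
  rintro _ ⟨D, rfl⟩
  convert BSpecIn.isOpen_setOf_mem (I := Set.Iic A) inf_le_left using 1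
  exact Set.ext fun ξ => mem_iotaSet_iff_inf_mem ξ

theorem continuous_restrictIic (A : B) : Continuous (restrictIic A) := by
  refine continuous_generateFrom_iff.mpr ?_
  rintro _ ⟨E, hE, rfl⟩
  have hpre : restrictIic A ⁻¹' {ξ | E ∈ ξ.carrier} = Subtype.val ⁻¹' cylZ E :=
    Set.ext fun _ => and_iff_left hE
  rw [hpre]
  exact (isOpen_cylZ E).preimage continuous_subtype_val

def iotaHomeomorph (A : B) : BSpecIn (Set.Iic A) ≃ₜ cylZ A where
  toFun := iotaCylZ A
  invFun := restrictIic A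
  left_inv ξ := BSpecIn.ext ξ.ultra.1.iotaSet_inter
  right_inv η := Subtype.ext <| BSpec.ext <|
    η.1.ultra.iotaSet_inter (isBIdeal_Iic A) le_rfl η.2
  continuous_toFun := continuous_iotaCylZ A
  continuous_invFun := continuous_restrictIic A

end GeneralizedBooleanAlgebra

theorem stmt6 [GeneralizedBooleanAlgebra B] (I : Set B) (hI : IsBIdeal I) :
    (∀ ξ : Set B, IsBUltraIn I ξ → IsBUltra (iotaSet ξ)) ∧
      (∀ ξ ζ : Set B, IsBUltraIn I ξ → IsBUltraIn I ζ → iotaSet ξ = iotaSet ζ → ξ = ζ) ∧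
      (∀ η : Set B, IsBUltra η →
        ((∃ ξ : Set B, IsBUltraIn I ξ ∧ iotaSet ξ = η) ↔ ∃ A ∈ I, A ∈ η)) ∧
      ∀ A : B, ∃ h : BSpecIn (Set.Iic A) ≃ₜ cylZ A,
        ∀ ξ : BSpecIn (Set.Iic A), ((h ξ : BSpec B)).carrier = iotaSet ξ.carrier :=
  ⟨fun _ hξ => hξ.isBUltra_iotaSet,
    fun _ _ hξ hζ h => iotaSet_injOn hξ hζ h,
    fun _ hη => exists_iotaSet_eq_iff hI hη,
    fun A => ⟨iotaHomeomorph A, fun _ => rfl⟩⟩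
end

section
/- Let E = (E⁰, E¹, d, r) be a 0-dimensional topological graph and {V_α}_{α∈L} a family of subsets of E¹ that compactly supports E. Let B be the collection of compact clopen subsets of E⁰, a generalized Boolean algebra under set intersection, union and difference. Then for each α ∈ L the map θ_α(A) := d(r⁻¹(A) ∩ V_α) sends B into B and preserves ∩, ∪, ∖ and ∅; the family {θ_α(A) : A ∈ B} has least upper bound R_α := d(V_α) in B; and θ_α(D_α) = R_α. Consequently every finite word over L gives a composite with compact range and closed domain, so (B, L, θ) is a Boolean dynamical system. -/
/-!
Since `d` is injective on `V a`, taking images under `d` commutes with the Boolean operations on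
subsets of `V a`, and preimages under `r` always do; so `θ_a` is a Boolean homomorphism. As `d` is
continuous and open, it maps the compact open set `r⁻¹(A) ∩ V a` to a compact clopen set. Every
`θ_a(A)` lies in `d(V a) = θ_a(D a)`, so the range of `θ_a` has a greatest element, and the image
of a greatest element under the monotone map `θ_w` is again greatest, which handles longer words.
-/

open Set

/-- The composite action `θ_{α_n} ∘ ⋯ ∘ θ_{α_1}` of a finite word `w = α_1 ⋯ α_n`. -/
def wordAct {X L : Type*} (θ : L → X → X) (w : List L) (A : X) : X :=
  w.foldl (fun C a => θ a C) A

/-- The action `θ_a(A) := d(r⁻¹(A) ∩ V_a)` associated to a compactly supporting family. -/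
def thGr {E0 E1 L : Type*} (d r : E1 → E0) (V : L → Set E1) (a : L) (A : Set E0) : Set E0 :=
  d '' (r ⁻¹' A ∩ V a)

/-- The collection of compact clopen subsets of a topological space, a generalized Boolean
algebra under set intersection, union and difference. -/
def ccs (E0 : Type*) [TopologicalSpace E0] : Set (Set E0) :=
  {A : Set E0 | IsCompact A ∧ IsClopen A}

section WordAct

variable {X L : Type*} {θ : L → X → X}

theorem wordAct_cons (a : L) (w : List L) : wordAct θ (a :: w) = wordAct θ w ∘ θ a :=
  rfl

theorem wordAct_mapsTo {S : Set X} (h : ∀ a, MapsTo (θ a) S S) :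
    ∀ w : List L, MapsTo (wordAct θ w) S S
  | [] => mapsTo_id S
  | a :: w => (wordAct_mapsTo h w).comp (h a)

theorem wordAct_monotone [Preorder X] (h : ∀ a, Monotone (θ a)) :
    ∀ w : List L, Monotone (wordAct θ w)
  | [] => monotone_id
  | a :: w => (wordAct_monotone h w).comp (h a)

theorem isGreatest_image_wordAct_cons [Preorder X] (h : ∀ a, Monotone (θ a)) {S : Set X}
    {a : L} {R : X} (hR : IsGreatest (θ a '' S) R) (w : List L) :
    IsGreatest (wordAct θ (a :: w) '' S) (wordAct θ w R) := by
  rw [wordAct_cons, image_comp]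
  exact (wordAct_monotone h w).map_isGreatest hR

end WordAct

theorem IsGreatest.bounds_of_mapsTo {X : Type*} [Preorder X] {f : X → X} {S : Set X} {R : X}
    (hf : MapsTo f S S) (hR : IsGreatest (f '' S) R) :
    R ∈ S ∧ (∀ A ∈ S, f A ≤ R) ∧ (∀ U ∈ S, (∀ A ∈ S, f A ≤ U) → R ≤ U) ∧
      ∃ D ∈ S, f D = R := by
  obtain ⟨⟨D, hD, rfl⟩, hub⟩ := hR
  exact ⟨hf hD, fun A hA => hub (mem_image_of_mem f hA), fun U _ hU => hU D hD, D, hD, rfl⟩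

section ThGr

variable {X Y L : Type*} {d r : Y → X} {V : L → Set Y} {a : L}

theorem thGr_mono : Monotone (thGr d r V a) := fun _ _ hAC =>
  image_mono (inter_subset_inter_left _ (preimage_mono hAC))

theorem thGr_subset_image (A : Set X) : thGr d r V a A ⊆ d '' V a :=
  image_mono inter_subset_right

theorem thGr_eq_image_of_image_subset {D : Set X} (hD : r '' V a ⊆ D) :
    thGr d r V a D = d '' V a := by
  rw [thGr, inter_eq_self_of_subset_right (image_subset_iff.mp hD)]

theorem isGreatest_image_thGr {S : Set (Set X)} {D : Set X} (hDS : D ∈ S) (hD : r '' V a ⊆ D) :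
    IsGreatest (thGr d r V a '' S) (d '' V a) :=
  ⟨⟨D, hDS, thGr_eq_image_of_image_subset hD⟩, forall_mem_image.2 fun A _ => thGr_subset_image A⟩

theorem thGr_empty : thGr d r V a ∅ = ∅ := by
  simp [thGr]

theorem thGr_union (A C : Set X) : thGr d r V a (A ∪ C) = thGr d r V a A ∪ thGr d r V a C := by
  rw [thGr, preimage_union, union_inter_distrib_right, image_union, thGr, thGr]

theorem thGr_inter (hinj : InjOn d (V a)) (A C : Set X) :
    thGr d r V a (A ∩ C) = thGr d r V a A ∩ thGr d r V a C := by
  rw [thGr, preimage_inter, inter_inter_distrib_right,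
    hinj.image_inter inter_subset_right inter_subset_right, thGr, thGr]

theorem thGr_sdiff (hinj : InjOn d (V a)) (A C : Set X) :
    thGr d r V a (A \ C) = thGr d r V a A \ thGr d r V a C := by
  rw [thGr, preimage_sdiff, inter_sdiff_distrib_right, ← sdiff_self_inter,
    (hinj.mono inter_subset_right).image_sdiff_subset inter_subset_left,
    hinj.image_inter inter_subset_right inter_subset_right, sdiff_self_inter, thGr, thGr]

end ThGr

theorem image_mem_ccs {X Y : Type*} [TopologicalSpace X] [TopologicalSpace Y] [T2Space X]
    {d : Y → X} (hdc : Continuous d) (hdo : IsOpenMap d) {S : Set Y} (hSc : IsCompact S)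
    (hSo : IsOpen S) : d '' S ∈ ccs X :=
  ⟨hSc.image hdc, ⟨(hSc.image hdc).isClosed, hdo S hSo⟩⟩

theorem thGr_mem_ccs {X Y L : Type*} [TopologicalSpace X] [TopologicalSpace Y] [T2Space X]
    {d r : Y → X} (hdc : Continuous d) (hdo : IsOpenMap d) (hr : Continuous r) {V : L → Set Y}
    {a : L} (hVc : IsCompact (V a)) (hVo : IsOpen (V a)) {A : Set X} (hA : A ∈ ccs X) :
    thGr d r V a A ∈ ccs X :=
  image_mem_ccs hdc hdo (hVc.inter_left (hA.2.isClosed.preimage hr))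
    ((hA.2.isOpen.preimage hr).inter hVo)

theorem stmt9_general {E0 E1 L : Type*} [TopologicalSpace E0] [TopologicalSpace E1]
    [T2Space E0]
    (d r : E1 → E0) (hd : IsLocalHomeomorph d) (hr : Continuous r)
    (V : L → Set E1)
    (hVcpt : ∀ a : L, IsCompact (V a)) (hVclopen : ∀ a : L, IsClopen (V a))
    (hVemb : ∀ a : L, Topology.IsEmbedding ((V a).restrict d))
    (D : L → Set E0)
    (hDcpt : ∀ a : L, IsCompact (D a)) (hDclopen : ∀ a : L, IsClopen (D a))
    (hDr : ∀ a : L, r '' V a ⊆ D a) :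
    (∀ a : L, ∀ A ∈ ccs E0, thGr d r V a A ∈ ccs E0) ∧
      (∀ a : L, ∀ A ∈ ccs E0, ∀ C ∈ ccs E0,
        thGr d r V a (A ∩ C) = thGr d r V a A ∩ thGr d r V a C ∧
        thGr d r V a (A ∪ C) = thGr d r V a A ∪ thGr d r V a C ∧
        thGr d r V a (A \ C) = thGr d r V a A \ thGr d r V a C) ∧
      (∀ a : L, thGr d r V a ∅ = ∅) ∧
      (∀ a : L, d '' V a ∈ ccs E0 ∧
        (∀ A ∈ ccs E0, thGr d r V a A ⊆ d '' V a) ∧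
        ∀ U ∈ ccs E0, (∀ A ∈ ccs E0, thGr d r V a A ⊆ U) → d '' V a ⊆ U) ∧
      (∀ a : L, thGr d r V a (D a) = d '' V a) ∧
      ∀ w : List L, w ≠ [] →
        ∃ R ∈ ccs E0,
          (∀ A ∈ ccs E0, wordAct (thGr d r V) w A ⊆ R) ∧
          (∀ U ∈ ccs E0, (∀ A ∈ ccs E0, wordAct (thGr d r V) w A ⊆ U) → R ⊆ U) ∧
          ∃ Dw ∈ ccs E0, wordAct (thGr d r V) w Dw = R := by
  have hmaps : ∀ a, MapsTo (thGr d r V a) (ccs E0) (ccs E0) := fun a _ hA =>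
    thGr_mem_ccs hd.continuous hd.isOpenMap hr (hVcpt a) (hVclopen a).isOpen hA
  have hinj : ∀ a, InjOn d (V a) := fun a => injOn_iff_injective.mpr (hVemb a).injective
  have hgreatest : ∀ a, IsGreatest (thGr d r V a '' ccs E0) (d '' V a) := fun a =>
    isGreatest_image_thGr ⟨hDcpt a, hDclopen a⟩ (hDr a)
  refine ⟨hmaps, fun a A _ C _ => ⟨thGr_inter (hinj a) A C, thGr_union A C,
    thGr_sdiff (hinj a) A C⟩, fun _ => thGr_empty, fun a => ?_,
    fun a => thGr_eq_image_of_image_subset (hDr a), ?_⟩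
  · obtain ⟨hmem, hub, hleast, -⟩ := (hgreatest a).bounds_of_mapsTo (hmaps a)
    exact ⟨hmem, hub, hleast⟩
  · rintro (_ | ⟨a, w⟩) hw
    · exact absurd rfl hw
    have hword := isGreatest_image_wordAct_cons (fun b => thGr_mono (a := b)) (hgreatest a) w
    exact ⟨_, hword.bounds_of_mapsTo (wordAct_mapsTo hmaps _)⟩

theorem stmt9 {E0 E1 L : Type*} [TopologicalSpace E0] [TopologicalSpace E1]
    [T2Space E0] [T2Space E1] [LocallyCompactSpace E0] [LocallyCompactSpace E1]
    (hb0 : TopologicalSpace.IsTopologicalBasis {U : Set E0 | IsClopen U})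
    (hb1 : TopologicalSpace.IsTopologicalBasis {U : Set E1 | IsClopen U})
    (d r : E1 → E0) (hd : IsLocalHomeomorph d) (hr : Continuous r)
    (V : L → Set E1)
    (hVcpt : ∀ a : L, IsCompact (V a)) (hVclopen : ∀ a : L, IsClopen (V a))
    (hVcover : (⋃ a : L, V a) = Set.univ)
    (hVdisj : ∀ a b : L, a ≠ b → V a ∩ V b = ∅)
    (hVemb : ∀ a : L, Topology.IsEmbedding ((V a).restrict d))
    (D : L → Set E0)
    (hDcpt : ∀ a : L, IsCompact (D a)) (hDclopen : ∀ a : L, IsClopen (D a))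
    (hDr : ∀ a : L, r '' V a ⊆ D a) :
    (∀ a : L, ∀ A ∈ ccs E0, thGr d r V a A ∈ ccs E0) ∧
      (∀ a : L, ∀ A ∈ ccs E0, ∀ C ∈ ccs E0,
        thGr d r V a (A ∩ C) = thGr d r V a A ∩ thGr d r V a C ∧
        thGr d r V a (A ∪ C) = thGr d r V a A ∪ thGr d r V a C ∧
        thGr d r V a (A \ C) = thGr d r V a A \ thGr d r V a C) ∧
      (∀ a : L, thGr d r V a ∅ = ∅) ∧
      (∀ a : L, d '' V a ∈ ccs E0 ∧
        (∀ A ∈ ccs E0, thGr d r V a A ⊆ d '' V a) ∧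
        ∀ U ∈ ccs E0, (∀ A ∈ ccs E0, thGr d r V a A ⊆ U) → d '' V a ⊆ U) ∧
      (∀ a : L, thGr d r V a (D a) = d '' V a) ∧
      ∀ w : List L, w ≠ [] →
        ∃ R ∈ ccs E0,
          (∀ A ∈ ccs E0, wordAct (thGr d r V) w A ⊆ R) ∧
          (∀ U ∈ ccs E0, (∀ A ∈ ccs E0, wordAct (thGr d r V) w A ⊆ U) → R ⊆ U) ∧
          ∃ Dw ∈ ccs E0, wordAct (thGr d r V) w Dw = R :=
  stmt9_general d r hd hr V hVcpt hVclopen hVemb D hDcpt hDclopen hDr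
end

section
/- Let E = (E⁰, E¹, d, r) be a 0-dimensional topological graph with a family {V_α}_{α∈L} compactly supporting E, let B be the generalized Boolean algebra of compact clopen subsets of E⁰, and let θ_α(A) := d(r⁻¹(A) ∩ V_α). For A ∈ B, set Δ_A := {α ∈ L : θ_α(A) ≠ ∅} and λ_A := |Δ_A|. Then: (1) A ⊆ E⁰_sce if and only if λ_A = 0; (2) A ⊆ E⁰_fin if and only if λ_A < ∞; (3) A ⊆ E⁰_rg if and only if A is regular, i.e., every nonempty compact clopen B ⊆ A satisfies 0 < λ_B < ∞. -/
open Set Function Topology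

theorem setOf_inter_nonempty_eq_empty_iff {X ι : Type*} {V : ι → Set X}
    (hcover : ⋃ i, V i = univ) (S : Set X) :
    {i | (V i ∩ S).Nonempty} = ∅ ↔ S = ∅ := by
  rw [← not_nonempty_iff_eq_empty, ← not_nonempty_iff_eq_empty, not_iff_not]
  refine ⟨fun ⟨i, x, _, hx⟩ => ⟨x, hx⟩, fun ⟨x, hx⟩ => ?_⟩
  obtain ⟨i, hxi⟩ := iUnion_eq_univ_iff.mp hcover x
  exact ⟨i, x, hxi, hx⟩

section DisjointCover

variable {X ι : Type*} [TopologicalSpace X] {V : ι → Set X}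

theorem locallyFinite_of_pairwise_disjoint_isOpen_cover (hcover : ⋃ i, V i = univ)
    (hopen : ∀ i, IsOpen (V i)) (hdisj : Pairwise (Disjoint on V)) : LocallyFinite V := by
  intro x
  obtain ⟨i, hxi⟩ := iUnion_eq_univ_iff.mp hcover x
  refine ⟨V i, (hopen i).mem_nhds hxi, (finite_singleton i).subset fun j hj => ?_⟩
  by_contra hji
  obtain ⟨y, hyj, hyi⟩ := hj
  exact disjoint_left.mp (hdisj hji) hyj hyi

theorem IsClosed.isCompact_iff_finite_setOf_inter_nonempty (hcover : ⋃ i, V i = univ)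
    (hopen : ∀ i, IsOpen (V i)) (hcpt : ∀ i, IsCompact (V i))
    (hdisj : Pairwise (Disjoint on V)) {S : Set X} (hS : IsClosed S) :
    IsCompact S ↔ {i | (V i ∩ S).Nonempty}.Finite := by
  have hV := locallyFinite_of_pairwise_disjoint_isOpen_cover hcover hopen hdisj
  refine ⟨hV.finite_nonempty_inter_compact, fun hfin => ?_⟩
  have hS_eq : S = ⋃ i ∈ {i | (V i ∩ S).Nonempty}, V i ∩ S := by
    refine Subset.antisymm (fun x hx => ?_) (iUnion₂_subset fun i _ => inter_subset_right)
    obtain ⟨i, hxi⟩ := iUnion_eq_univ_iff.mp hcover x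
    exact mem_biUnion ⟨x, hxi, hx⟩ ⟨hxi, hx⟩
  rw [hS_eq]
  exact hfin.isCompact_biUnion fun i _ => (hcpt i).inter_right hS

end DisjointCover

section Receivers

variable {X Y : Type*} [TopologicalSpace X] {r : Y → X} {A : Set X}

theorem subset_compl_closure_range_iff (hA : IsOpen A) :
    A ⊆ (closure (range r))ᶜ ↔ r ⁻¹' A = ∅ := by
  rw [preimage_eq_empty_iff, ← subset_compl_iff_disjoint_right, subset_compl_comm,
    hA.isClosed_compl.closure_subset_iff, subset_compl_comm]

theorem subset_setOf_isCompact_preimage_iff [TopologicalSpace Y] (hr : Continuous r)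
    (hA : A ∈ ccs X) :
    A ⊆ {v | ∃ U : Set X, IsOpen U ∧ v ∈ U ∧ IsCompact (r ⁻¹' U)} ↔ IsCompact (r ⁻¹' A) := by
  refine ⟨fun h => ?_, fun h v hv => ⟨A, hA.2.isOpen, hv, h⟩⟩
  choose U hUopen hUmem hUcpt using fun v (hv : v ∈ A) => h hv
  obtain ⟨t, ht⟩ := hA.1.elim_nhds_subcover' U fun v hv => (hUopen v hv).mem_nhds (hUmem v hv)
  refine (t.isCompact_biUnion fun v _ => hUcpt v v.2).of_isClosed_subset
    (hA.2.isClosed.preimage hr) fun x hx => ?_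
  simpa only [mem_iUnion, mem_preimage] using ht hx

end Receivers

theorem subset_diff_closure_iff_forall_ccs {X : Type*} [TopologicalSpace X]
    (hb : TopologicalSpace.IsTopologicalBasis {U : Set X | IsClopen U})
    {A W F : Set X} (hA : A ∈ ccs X) (hW : IsOpen W) :
    A ⊆ F \ closure W ↔ ∀ C ∈ ccs X, C ⊆ A → C ≠ ∅ → ¬ C ⊆ W ∧ C ⊆ F := by
  refine ⟨fun h C _ hCA hC => ?_, fun h v hv => ⟨?_, fun hvW => ?_⟩⟩
  · obtain ⟨x, hx⟩ := nonempty_iff_ne_empty.mpr hC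
    exact ⟨fun hCW => (h (hCA hx)).2 (subset_closure (hCW hx)), hCA.trans fun y hy => (h hy).1⟩
  · exact (h A hA subset_rfl (nonempty_iff_ne_empty.mp ⟨v, hv⟩)).2 hv
  · obtain ⟨w, hwA, hwW⟩ := mem_closure_iff.mp hvW A hA.2.isOpen hv
    obtain ⟨C, hC, hwC, hCAW⟩ :=
      hb.exists_subset_of_mem_open (mem_inter hwA hwW) (hA.2.isOpen.inter hW)
    have hCA : C ⊆ A := hCAW.trans inter_subset_left
    exact (h C ⟨hA.1.of_isClosed_subset hC.isClosed hCA, hC⟩ hCA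
      (nonempty_iff_ne_empty.mp ⟨w, hwC⟩)).1 (hCAW.trans inter_subset_right)

theorem setOf_thGr_ne_empty {E0 E1 L : Type*} (d r : E1 → E0) (V : L → Set E1) (A : Set E0) :
    {a | thGr d r V a A ≠ ∅} = {a | (V a ∩ r ⁻¹' A).Nonempty} := by
  ext a
  change thGr d r V a A ≠ ∅ ↔ (V a ∩ r ⁻¹' A).Nonempty
  rw [← nonempty_iff_ne_empty, thGr, image_nonempty, inter_comm]

theorem stmt10_general {E0 E1 L : Type*} [TopologicalSpace E0] [TopologicalSpace E1]
    (hb0 : TopologicalSpace.IsTopologicalBasis {U : Set E0 | IsClopen U})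
    (d r : E1 → E0) (hr : Continuous r)
    (V : L → Set E1)
    (hVcpt : ∀ a : L, IsCompact (V a)) (hVclopen : ∀ a : L, IsClopen (V a))
    (hVcover : (⋃ a : L, V a) = Set.univ)
    (hVdisj : ∀ a b : L, a ≠ b → V a ∩ V b = ∅)
    (A : Set E0) (hA : A ∈ ccs E0) :
    (A ⊆ (closure (Set.range r))ᶜ ↔ {a : L | thGr d r V a A ≠ ∅} = ∅) ∧
      (A ⊆ {v : E0 | ∃ U : Set E0, IsOpen U ∧ v ∈ U ∧ IsCompact (r ⁻¹' U)} ↔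
        {a : L | thGr d r V a A ≠ ∅}.Finite) ∧
      (A ⊆ {v : E0 | ∃ U : Set E0, IsOpen U ∧ v ∈ U ∧ IsCompact (r ⁻¹' U)} \
            closure ((closure (Set.range r))ᶜ) ↔
        ∀ C ∈ ccs E0, C ⊆ A → C ≠ ∅ →
          ({a : L | thGr d r V a C ≠ ∅}.Nonempty ∧ {a : L | thGr d r V a C ≠ ∅}.Finite)) := by
  have hsce : ∀ C ∈ ccs E0, C ⊆ (closure (range r))ᶜ ↔ {a : L | thGr d r V a C ≠ ∅} = ∅ :=
    fun C hC => by
      rw [subset_compl_closure_range_iff hC.2.isOpen, setOf_thGr_ne_empty,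
        setOf_inter_nonempty_eq_empty_iff hVcover]
  have hfin : ∀ C ∈ ccs E0, C ⊆ {v | ∃ U : Set E0, IsOpen U ∧ v ∈ U ∧ IsCompact (r ⁻¹' U)} ↔
      {a : L | thGr d r V a C ≠ ∅}.Finite := fun C hC => by
    rw [subset_setOf_isCompact_preimage_iff hr hC, setOf_thGr_ne_empty,
      (hC.2.isClosed.preimage hr).isCompact_iff_finite_setOf_inter_nonempty hVcover
        (fun a => (hVclopen a).isOpen) hVcpt
        fun a b hab => disjoint_iff_inter_eq_empty.mpr (hVdisj a b hab)]
  refine ⟨hsce A hA, hfin A hA, ?_⟩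
  rw [subset_diff_closure_iff_forall_ccs hb0 hA isClosed_closure.isOpen_compl]
  refine forall₂_congr fun C hC => imp_congr_right fun _ => imp_congr_right fun _ => ?_
  rw [hsce C hC, hfin C hC, nonempty_iff_ne_empty]

theorem stmt10 {E0 E1 L : Type*} [TopologicalSpace E0] [TopologicalSpace E1]
    [T2Space E0] [T2Space E1] [LocallyCompactSpace E0] [LocallyCompactSpace E1]
    (hb0 : TopologicalSpace.IsTopologicalBasis {U : Set E0 | IsClopen U})
    (hb1 : TopologicalSpace.IsTopologicalBasis {U : Set E1 | IsClopen U})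
    (d r : E1 → E0) (hd : IsLocalHomeomorph d) (hr : Continuous r)
    (V : L → Set E1)
    (hVcpt : ∀ a : L, IsCompact (V a)) (hVclopen : ∀ a : L, IsClopen (V a))
    (hVcover : (⋃ a : L, V a) = Set.univ)
    (hVdisj : ∀ a b : L, a ≠ b → V a ∩ V b = ∅)
    (hVemb : ∀ a : L, Topology.IsEmbedding ((V a).restrict d))
    (D : L → Set E0)
    (hDcpt : ∀ a : L, IsCompact (D a)) (hDclopen : ∀ a : L, IsClopen (D a))
    (hDr : ∀ a : L, r '' V a ⊆ D a)
    (A : Set E0) (hA : A ∈ ccs E0) :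
    (A ⊆ (closure (Set.range r))ᶜ ↔ {a : L | thGr d r V a A ≠ ∅} = ∅) ∧
      (A ⊆ {v : E0 | ∃ U : Set E0, IsOpen U ∧ v ∈ U ∧ IsCompact (r ⁻¹' U)} ↔
        {a : L | thGr d r V a A ≠ ∅}.Finite) ∧
      (A ⊆ {v : E0 | ∃ U : Set E0, IsOpen U ∧ v ∈ U ∧ IsCompact (r ⁻¹' U)} \
            closure ((closure (Set.range r))ᶜ) ↔
        ∀ C ∈ ccs E0, C ⊆ A → C ≠ ∅ →
          ({a : L | thGr d r V a C ≠ ∅}.Nonempty ∧ {a : L | thGr d r V a C ≠ ∅}.Finite)) :=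
  stmt10_general hb0 d r hr V hVcpt hVclopen hVcover hVdisj A hA
end

section
/- Let B be a generalized Boolean algebra and let θ : B → B be an action with compact range R (the least upper bound of {θ(A) : A ∈ B}) and closed domain D (i.e., θ(D) = R). Let ξ be an ultrafilter of the principal ideal I_R and let A ∈ B. Then the following are equivalent: (1) θ(A) ∈ ξ; (2) there exists C ∈ I_D with C ⊆ A and θ(C) ∈ ξ. (In the associated topological graph this says: for the edge e^θ_ξ, one has r(e^θ_ξ) ∈ N_A if and only if d(e^θ_ξ) ∈ N_{θ(A)}.) -/
variable {B : Type*}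

section MeetPreserving

variable [SemilatticeInf B] {θ : B → B}

theorem monotone_of_map_inf (hinf : ∀ A C : B, θ (A ⊓ C) = θ A ⊓ θ C) : Monotone θ :=
  OrderHomClass.mono (⟨θ, hinf⟩ : InfHom B B)

theorem map_inf_eq_of_mem_upperBounds (hinf : ∀ A C : B, θ (A ⊓ C) = θ A ⊓ θ C) {D : B}
    (hD : θ D ∈ upperBounds (Set.range θ)) (A : B) : θ (A ⊓ D) = θ A := by
  rw [hinf, inf_eq_left.mpr (hD ⟨A, rfl⟩)]

end MeetPreserving

theorem stmt13_general [GeneralizedBooleanAlgebra B] (θ : B → B)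
    (hinf : ∀ A C : B, θ (A ⊓ C) = θ A ⊓ θ C)
    (R D : B) (hR : IsLUB (Set.range θ) R) (hD : θ D = R)
    (ξ : Set B) (hξ : IsBUltraIn (Set.Iic R) ξ) (A : B) :
    θ A ∈ ξ ↔ ∃ C : B, C ≤ D ∧ C ≤ A ∧ θ C ∈ ξ := by
  obtain ⟨⟨-, -, -, hup, -⟩, -⟩ := hξ
  constructor
  · intro hA
    refine ⟨A ⊓ D, inf_le_right, inf_le_left, ?_⟩
    rwa [map_inf_eq_of_mem_upperBounds hinf (hD ▸ hR.1)]
  · rintro ⟨C, -, hCA, hC⟩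
    exact hup _ hC _ (hR.1 ⟨A, rfl⟩) (monotone_of_map_inf hinf hCA)

theorem stmt13 [GeneralizedBooleanAlgebra B] (θ : B → B)
    (hinf : ∀ A C : B, θ (A ⊓ C) = θ A ⊓ θ C)
    (hsup : ∀ A C : B, θ (A ⊔ C) = θ A ⊔ θ C)
    (hsdiff : ∀ A C : B, θ (A \ C) = θ A \ θ C)
    (hbot : θ ⊥ = ⊥)
    (R D : B) (hR : IsLUB (Set.range θ) R) (hD : θ D = R)
    (ξ : Set B) (hξ : IsBUltraIn (Set.Iic R) ξ) (A : B) :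
    θ A ∈ ξ ↔ ∃ C : B, C ≤ D ∧ C ≤ A ∧ θ C ∈ ξ :=
  stmt13_general θ hinf R D hR hD ξ hξ A
end

section
/- Let B be a generalized Boolean algebra and let θ : B → B be a Boolean homomorphism with θ(∅) = ∅. Let ∅ ≠ A ∈ B and suppose that for every integer k ≥ 0 one has θ^k(A) ≠ ∅ and that every nonempty B ⊆ θ^k(A) satisfies B ∩ θ(B) ≠ ∅. Then θ(A) = A, and moreover θ(B) = B for every B ⊆ A. (This is the key step showing that a cycle (α, A) of a Boolean dynamical system forces θ_α to restrict to the identity on the principal ideal I_A.) -/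
/-!
If `C ≤ A` and `θ C ≠ C`, then either `C \ θ C` (below `A`) or `θ C \ C` (below `θ A`) is a
nonzero element disjoint from its own image, which the hypothesis on `A` and `θ A` forbids.
-/

section GeneralizedBooleanAlgebra

variable {B : Type*} [GeneralizedBooleanAlgebra B] {θ : B → B}

theorem map_bot_of_map_sdiff (hsdiff : ∀ a b : B, θ (a \ b) = θ a \ θ b) : θ ⊥ = ⊥ := by
  simpa using hsdiff ⊥ ⊥

theorem monotone_of_map_sdiff (hsdiff : ∀ a b : B, θ (a \ b) = θ a \ θ b) : Monotone θ :=
  fun a b hab => sdiff_eq_bot_iff.mp <| by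
    rw [← hsdiff, sdiff_eq_bot_iff.mpr hab, map_bot_of_map_sdiff hsdiff]

theorem disjoint_sdiff_map_map (hsdiff : ∀ a b : B, θ (a \ b) = θ a \ θ b) (a : B) :
    Disjoint (a \ θ a) (θ (a \ θ a)) := by
  rw [hsdiff]
  exact disjoint_sdiff_self_left.mono_right sdiff_le

theorem disjoint_map_sdiff_map (hsdiff : ∀ a b : B, θ (a \ b) = θ a \ θ b) (a : B) :
    Disjoint (θ a \ a) (θ (θ a \ a)) := by
  rw [hsdiff]
  exact disjoint_sdiff_self_right.mono_left sdiff_le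

theorem map_eq_self_of_le (hsdiff : ∀ a b : B, θ (a \ b) = θ a \ θ b) {A : B}
    (hA : ∀ C ≤ A, Disjoint C (θ C) → C = ⊥)
    (hθA : ∀ C ≤ θ A, Disjoint C (θ C) → C = ⊥) {C : B} (hC : C ≤ A) : θ C = C :=
  le_antisymm
    (sdiff_eq_bot_iff.mp <| hθA _ (sdiff_le.trans (monotone_of_map_sdiff hsdiff hC))
      (disjoint_map_sdiff_map hsdiff C))
    (sdiff_eq_bot_iff.mp <| hA _ (sdiff_le.trans hC) (disjoint_sdiff_map_map hsdiff C))

end GeneralizedBooleanAlgebra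

theorem stmt14_general {B : Type*} [GeneralizedBooleanAlgebra B] (θ : B → B)
    (hsdiff : ∀ A C : B, θ (A \ C) = θ A \ θ C)
    (A : B)
    (hcyc : ∀ k : ℕ, ∀ C : B, C ≤ θ^[k] A → C ≠ ⊥ → C ⊓ θ C ≠ ⊥) :
    θ A = A ∧ ∀ C : B, C ≤ A → θ C = C := by
  have hwandering : ∀ k : ℕ, ∀ C ≤ θ^[k] A, Disjoint C (θ C) → C = ⊥ :=
    fun k C hC hdisj => by_contra fun hC0 => hcyc k C hC hC0 (disjoint_iff.mp hdisj)
  have hfix : ∀ C : B, C ≤ A → θ C = C :=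
    fun _ => map_eq_self_of_le hsdiff (hwandering 0) (hwandering 1)
  exact ⟨hfix A le_rfl, hfix⟩

theorem stmt14 {B : Type*} [GeneralizedBooleanAlgebra B] (θ : B → B)
    (hinf : ∀ A C : B, θ (A ⊓ C) = θ A ⊓ θ C)
    (hsup : ∀ A C : B, θ (A ⊔ C) = θ A ⊔ θ C)
    (hsdiff : ∀ A C : B, θ (A \ C) = θ A \ θ C)
    (hbot : θ ⊥ = ⊥)
    (A : B) (hA : A ≠ ⊥)
    (hne : ∀ k : ℕ, θ^[k] A ≠ ⊥)
    (hcyc : ∀ k : ℕ, ∀ C : B, C ≤ θ^[k] A → C ≠ ⊥ → C ⊓ θ C ≠ ⊥) :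
    θ A = A ∧ ∀ C : B, C ≤ A → θ C = C :=
  stmt14_general θ hsdiff A hcyc
end
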